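/- Let ε ∈ (0,1). The four circles C₁, C₂, C₃, C₄ are pairwise disjoint, and each is a single orbit of the Katok flow: for every i ∈ {1,2,3,4} and every p ∈ Cᵢ, the orbit {φ_t(p) : t ∈ ℝ} equals Cᵢ. Together with the characterization of periodic points this shows that for ε irrational the Katok flow on Σ⁵ has exactly four simple periodic orbits. -/

import Mathlib

noncomputable section

open Complex

/-- `ℂ⁴` with the Hermitian norm `‖z‖² = Σⱼ |zⱼ|²`. -/
abbrev C4 := EuclideanSpace ℂ (Fin 4)

def toC4 (v : Fin 4 → ℂ) : C4 := (WithLp.equiv 2 (Fin 4 → ℂ)).symm v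

/-- The Katok flow `φ_t(w) = (e^{2πit} w₀, e^{2πit} w₁, e^{2πi(1+ε)t} w₂, e^{2πi(1−ε)t} w₃)`. -/
def katok (ε : ℝ) (t : ℝ) (w : C4) : C4 := toC4
  ![Complex.exp (2 * (Real.pi : ℂ) * Complex.I * (t : ℂ)) * w 0,
    Complex.exp (2 * (Real.pi : ℂ) * Complex.I * (t : ℂ)) * w 1,
    Complex.exp (2 * (Real.pi : ℂ) * Complex.I * ((1 + ε : ℝ) : ℂ) * (t : ℂ)) * w 2,
    Complex.exp (2 * (Real.pi : ℂ) * Complex.I * ((1 - ε : ℝ) : ℂ) * (t : ℂ)) * w 3]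

/-- The Brieskorn quadric link `Σ⁵` in the unitary coordinates of the paper. -/
def Sigma5 : Set C4 := {w | w 0 ^ 2 + w 1 ^ 2 - 2 * Complex.I * w 2 * w 3 = 0 ∧ ‖w‖ = 1}

/-- `C₁ = {(w, i w, 0, 0) : |w| = √2/2}`. -/
def circ1 : Set C4 :=
  {p | ∃ w : ℂ, ‖w‖ = Real.sqrt 2 / 2 ∧ p = toC4 ![w, Complex.I * w, 0, 0]}

/-- `C₂ = {(w, −i w, 0, 0) : |w| = √2/2}`. -/
def circ2 : Set C4 :=
  {p | ∃ w : ℂ, ‖w‖ = Real.sqrt 2 / 2 ∧ p = toC4 ![w, -(Complex.I * w), 0, 0]}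

/-- `C₃ = {(0, 0, w, 0) : |w| = 1}`. -/
def circ3 : Set C4 :=
  {p | ∃ w : ℂ, ‖w‖ = 1 ∧ p = toC4 ![0, 0, w, 0]}

/-- `C₄ = {(0, 0, 0, w) : |w| = 1}`. -/
def circ4 : Set C4 :=
  {p | ∃ w : ℂ, ‖w‖ = 1 ∧ p = toC4 ![0, 0, 0, w]}

/-- The four circles, indexed by `Fin 4`. -/
def circles : Fin 4 → Set C4 := ![circ1, circ2, circ3, circ4]

/-!
Each `Cᵢ` is the circle of radius `rᵢ` in a complex line `ℂ vᵢ`, where `vᵢ` is supported on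
coordinates that the flow rotates with one common frequency `cᵢ ∈ {1, 1 + ε, 1 - ε}`, nonzero
for `ε ∈ (0,1)`. On that line the flow is multiplication by `e^{2πi cᵢ t}`, which sweeps out the
whole circle. The axes `vᵢ` are pairwise Hermitian-orthogonal, so the circles are disjoint.
-/

open Metric Set
open scoped Real

def katokFreq (ε : ℝ) : Fin 4 → ℝ := ![1, 1, 1 + ε, 1 - ε]

@[simp]
lemma toC4_apply (v : Fin 4 → ℂ) (j : Fin 4) : toC4 v j = v j := rfl

lemma katok_apply (ε t : ℝ) (w : C4) (j : Fin 4) :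
    katok ε t w j = exp (2 * π * I * katokFreq ε j * t) * w j := by
  fin_cases j <;> simp [katok, katokFreq]

lemma katok_smul_of_freq_eq {ε c : ℝ} {v : C4} (hv : ∀ j, v j ≠ 0 → katokFreq ε j = c)
    (t : ℝ) (w : ℂ) : katok ε t (w • v) = (exp (2 * π * I * c * t) * w) • v := by
  ext j
  by_cases h : v j = 0
  · simp [katok_apply, h]
  · simp only [katok_apply, PiLp.smul_apply, smul_eq_mul, hv j h]
    ring

lemma range_exp_two_pi_I_mul_mul {c : ℝ} (hc : c ≠ 0) (w : ℂ) :
    range (fun t : ℝ => exp (2 * π * I * c * t) * w) = sphere 0 ‖w‖ := by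
  have hsurj : Function.Surjective fun t : ℝ => 2 * π * c * t := by
    intro s
    refine ⟨s / (2 * π * c), ?_⟩
    field_simp
  have hunit : range (fun t : ℝ => exp (2 * π * I * c * t)) = sphere 0 1 := by
    have : (fun t : ℝ => exp (2 * π * I * c * t))
        = (fun s : ℝ => exp (s * I)) ∘ fun t => 2 * π * c * t := by
      ext t; simp only [Function.comp_apply]; push_cast; ring_nf
    rw [this, hsurj.range_comp, range_exp_mul_I]
  have : (fun t : ℝ => exp (2 * π * I * c * t) * w)
      = (w • ·) ∘ fun t : ℝ => exp (2 * π * I * c * t) := by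
    ext t; simp [mul_comm]
  rw [this, range_comp, hunit, image_smul, smul_sphere w 0 zero_le_one]
  simp

lemma disjoint_image_smul_sphere {E : Type*} [NormedAddCommGroup E] [InnerProductSpace ℂ E]
    {v v' : E} (h : inner ℂ v v' = 0) (hv : v ≠ 0) {r : ℝ} (hr : r ≠ 0) (r' : ℝ) :
    Disjoint ((· • v) '' sphere (0 : ℂ) r) ((· • v') '' sphere (0 : ℂ) r') := by
  rw [disjoint_left]
  rintro _ ⟨w, hw, rfl⟩ ⟨w', -, hww' : w' • v' = w • v⟩
  have : w * inner ℂ v v = 0 := by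
    rw [← inner_smul_right, ← hww', inner_smul_right, h, mul_zero]
  rcases mul_eq_zero.1 this with hw0 | hvv
  · exact hr (by simpa [hw0] using hw.symm)
  · exact hv (inner_self_eq_zero.1 hvv)

lemma range_katok_smul {ε c : ℝ} (hc : c ≠ 0) {v : C4} (hv : ∀ j, v j ≠ 0 → katokFreq ε j = c)
    (w : ℂ) : range (fun t => katok ε t (w • v)) = (fun u : ℂ => u • v) '' sphere 0 ‖w‖ := by
  have : (fun t => katok ε t (w • v))
      = (· • v) ∘ fun t : ℝ => exp (2 * π * I * c * t) * w :=
    funext fun t => katok_smul_of_freq_eq hv t w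
  rw [this, range_comp, range_exp_two_pi_I_mul_mul hc]

def circleAxis : Fin 4 → C4 :=
  ![toC4 ![1, I, 0, 0], toC4 ![1, -I, 0, 0], toC4 ![0, 0, 1, 0], toC4 ![0, 0, 0, 1]]

def circleRadius : Fin 4 → ℝ := ![√2 / 2, √2 / 2, 1, 1]

lemma smul_toC4 (w : ℂ) (v : Fin 4 → ℂ) : w • toC4 v = toC4 (w • v) := rfl

lemma circles_eq (i : Fin 4) :
    circles i = (fun w : ℂ => w • circleAxis i) '' sphere 0 (circleRadius i) := by
  fin_cases i <;> ext p <;>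
    simp [circles, circ1, circ2, circ3, circ4, circleAxis, circleRadius, smul_toC4, eq_comm,
      mul_comm I]

lemma circleRadius_ne_zero (i : Fin 4) : circleRadius i ≠ 0 := by
  fin_cases i <;> simp [circleRadius]

lemma circleAxis_ne_zero (i : Fin 4) : circleAxis i ≠ 0 := by
  fin_cases i <;> simp [circleAxis, PiLp.ext_iff, Fin.forall_fin_succ]

lemma inner_circleAxis {i j : Fin 4} (hij : i ≠ j) :
    inner ℂ (circleAxis i) (circleAxis j) = 0 := by
  fin_cases i <;> fin_cases j <;> simp_all [circleAxis, PiLp.inner_apply, Fin.sum_univ_four]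

lemma katokFreq_eq_of_circleAxis_ne_zero (ε : ℝ) (i j : Fin 4) (h : circleAxis i j ≠ 0) :
    katokFreq ε j = katokFreq ε i := by
  fin_cases i <;> fin_cases j <;> simp_all [circleAxis, katokFreq]

lemma katokFreq_ne_zero {ε : ℝ} (hε : ε ∈ Ioo (-1 : ℝ) 1) (i : Fin 4) : katokFreq ε i ≠ 0 := by
  obtain ⟨h₁, h₂⟩ := hε
  fin_cases i <;> simp [katokFreq] <;> linarith

/-- For `ε ∈ (0,1)`, the circles `C₁, C₂, C₃, C₄` are pairwise disjoint and each is a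
single orbit of the Katok flow: for any point of `Cᵢ`, its orbit equals `Cᵢ`. -/
theorem katok_circles_disjoint_single_orbits (ε : ℝ) (hε : ε ∈ Set.Ioo (0 : ℝ) 1) :
    Pairwise (Function.onFun Disjoint circles) ∧
    (∀ i : Fin 4, ∀ p ∈ circles i,
      Set.range (fun t : ℝ => katok ε t p) = circles i) := by
  refine ⟨fun i j hij => ?_, fun i p hp => ?_⟩
  · rw [Function.onFun, circles_eq, circles_eq]
    exact disjoint_image_smul_sphere (inner_circleAxis hij) (circleAxis_ne_zero i)
      (circleRadius_ne_zero i) _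
  · have hfreq := katokFreq_ne_zero ⟨by linarith [hε.1], hε.2⟩ i
    rw [circles_eq] at hp ⊢
    obtain ⟨w, hw, rfl⟩ := hp
    rw [range_katok_smul hfreq (katokFreq_eq_of_circleAxis_ne_zero ε i),
      mem_sphere_zero_iff_norm.1 hw]
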